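/- Determinization of Floyd automata preserves acceptance: a string y is accepted by the nondeterministic Floyd automaton A if and only if y is accepted by its powerset determinization Ã, where Ã has initial state (#, I × {⊥}) and final states {(#, K) | ∃ q ∈ F, (q, ⊥) ∈ K}. -/

import Mathlib

/-! # Preliminaries: precedence relations, Floyd automata, chains, supports,
operator (Floyd) grammars. -/

/-- The three operator precedence relations. -/
inductive PrecRel : Type
  | lt  -- ⋖ , yields precedence
  | eq  -- ≐ , equal in precedence
  | gt  -- ⋗ , takes precedence
deriving DecidableEq

/-- A (nondeterministic) Floyd automaton over a precedence alphabet `(T, M)`.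
`none` plays the role of the delimiter `#`. -/
structure FloydAutomaton (T : Type*) (Q : Type*) where
  /-- conflict-free operator precedence matrix over `T ∪ {#}` -/
  M : Option T → Option T → Option PrecRel
  /-- initial states -/
  init : Set Q
  /-- final states -/
  final : Set Q
  /-- push transition function -/
  push : Q → T → Set Q
  /-- flush transition function -/
  flush : Q → Q → Set Q

namespace FloydAutomaton

/-- A configuration: the bottom stack symbol `(#, base)` is represented by `base`,
the rest of the stack is a list (top = head) of triples (marked?, symbol, state),
and `input` is the remaining input (the trailing `#` is implicit). -/
structure Config (T : Type*) (Q : Type*) where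
  base : Q
  stack : List (Bool × T × Q)
  input : List T

variable {T Q : Type*}

/-- Symbol on top of the stack (`none` = `#`). -/
def Config.topSym (c : Config T Q) : Option T := c.stack.head?.map (fun s => s.2.1)

/-- State on top of the stack. -/
def Config.topState (c : Config T Q) : Q := ((c.stack.head?.map (fun s => s.2.2)).getD c.base)

/-- Number of marked symbols on the stack. -/
def Config.marked (c : Config T Q) : ℕ := c.stack.countP (fun s => s.1)

variable (A : FloydAutomaton T Q)

/-- One move of a Floyd automaton: push (top ≐ current), mark (top ⋖ current),
flush (top ⋗ current). -/
inductive Step : Config T Q → Config T Q → Prop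
  | push {b : Q} {st : List (Bool × T × Q)} {w : List T} {q : Q} (a : T) :
      A.M (Config.topSym ⟨b, st, a :: w⟩) (some a) = some PrecRel.eq →
      q ∈ A.push (Config.topState ⟨b, st, a :: w⟩) a →
      Step ⟨b, st, a :: w⟩ ⟨b, (false, a, q) :: st, w⟩
  | mark {b : Q} {st : List (Bool × T × Q)} {w : List T} {q : Q} (a : T) :
      A.M (Config.topSym ⟨b, st, a :: w⟩) (some a) = some PrecRel.lt →
      q ∈ A.push (Config.topState ⟨b, st, a :: w⟩) a →
      Step ⟨b, st, a :: w⟩ ⟨b, (true, a, q) :: st, w⟩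
  | flushMid {b : Q} {pre : List (Bool × T × Q)} {x : T} {qm : Q}
      {s : Bool × T × Q} {rest : List (Bool × T × Q)} {w : List T} {q : Q} :
      (∀ p ∈ pre, p.1 = false) →
      A.M (Config.topSym ⟨b, pre ++ (true, x, qm) :: s :: rest, w⟩) w.head? = some PrecRel.gt →
      q ∈ A.flush (Config.topState ⟨b, pre ++ (true, x, qm) :: s :: rest, w⟩) s.2.2 →
      Step ⟨b, pre ++ (true, x, qm) :: s :: rest, w⟩ ⟨b, (s.1, s.2.1, q) :: rest, w⟩
  | flushBot {b : Q} {pre : List (Bool × T × Q)} {x : T} {qm : Q} {w : List T} {q : Q} :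
      (∀ p ∈ pre, p.1 = false) →
      A.M (Config.topSym ⟨b, pre ++ [(true, x, qm)], w⟩) w.head? = some PrecRel.gt →
      q ∈ A.flush (Config.topState ⟨b, pre ++ [(true, x, qm)], w⟩) b →
      Step ⟨b, pre ++ [(true, x, qm)], w⟩ ⟨q, [], w⟩

/-- Acceptance of a finite word. -/
def Accepts (x : List T) : Prop :=
  ∃ qI ∈ A.init, ∃ qF ∈ A.final,
    Relation.ReflTransGen A.Step ⟨qI, [], x⟩ ⟨qF, [], []⟩

/-- The language recognized by a Floyd automaton. -/
def language : Set (List T) := { x | A.Accepts x }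

/-- A Floyd automaton is deterministic iff it has one initial state and all
transition functions yield at most one state. -/
def Deterministic : Prop :=
  (∃ q, A.init = {q}) ∧ (∀ q a, (A.push q a).Subsingleton) ∧
    (∀ q p, (A.flush q p).Subsingleton)

/-- States of the powerset determinization: a lookback symbol together with a set
of pairs of states (`none` in the second component is `⊥`). -/
abbrev DetState (T : Type*) (Q : Type*) := Option T × Set (Q × Option Q)

/-- Push transition of the determinization. -/
def detPushF (s : DetState T Q) (a : T) : DetState T Q :=
  (some a, { ht | ∃ q p, (q, p) ∈ s.2 ∧ ht.1 ∈ A.push q a ∧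
      ((A.M s.1 (some a) = some PrecRel.lt ∧ ht.2 = some q) ∨
       (A.M s.1 (some a) = some PrecRel.eq ∧ ht.2 = p)) })

/-- Flush transition of the determinization. -/
def detFlushF (s₁ s₂ : DetState T Q) : DetState T Q :=
  (s₂.1, { hp | ∃ r q, (r, some q) ∈ s₁.2 ∧ (q, hp.2) ∈ s₂.2 ∧ hp.1 ∈ A.flush r q })

/-- The powerset determinization of a Floyd automaton. -/
def det : FloydAutomaton T (DetState T Q) where
  M := A.M
  init := {(none, { p | p.2 = none ∧ p.1 ∈ A.init })}
  final := { s | s.1 = none ∧ ∃ q ∈ A.final, (q, none) ∈ s.2 }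
  push := fun s a => {A.detPushF s a}
  flush := fun s₁ s₂ => {A.detFlushF s₁ s₂}

end FloydAutomaton

section Chains

variable {T : Type*}

mutual
/-- `ChainB M a₀ y b` : the word `y` is the body of a (simple or composed) chain
`⌈a₀⌉ y ⌊b⌋` over the precedence alphabet `(T, M)`. -/
inductive ChainB (M : Option T → Option T → Option PrecRel) :
    Option T → List T → Option T → Prop
  | head0 {a₀ b : Option T} {a₁ : T} {y : List T} :
      M a₀ b ≠ none →
      M a₀ (some a₁) = some PrecRel.lt →
      ChainT M a₁ y b →
      ChainB M a₀ (a₁ :: y) b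
  | head {a₀ b : Option T} {a₁ : T} {x₀ y : List T} :
      M a₀ b ≠ none →
      M a₀ (some a₁) = some PrecRel.lt →
      ChainB M a₀ x₀ (some a₁) →
      ChainT M a₁ y b →
      ChainB M a₀ (x₀ ++ a₁ :: y) b

/-- Auxiliary: tail of a chain body, after a skeleton symbol `a`. -/
inductive ChainT (M : Option T → Option T → Option PrecRel) :
    T → List T → Option T → Prop
  | last0 {a : T} {b : Option T} :
      M (some a) b = some PrecRel.gt →
      ChainT M a [] b
  | last {a : T} {xn : List T} {b : Option T} :
      ChainB M (some a) xn b →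
      M (some a) b = some PrecRel.gt →
      ChainT M a xn b
  | cons0 {a a' : T} {y : List T} {b : Option T} :
      M (some a) (some a') = some PrecRel.eq →
      ChainT M a' y b →
      ChainT M a (a' :: y) b
  | cons {a a' : T} {x y : List T} {b : Option T} :
      M (some a) (some a') = some PrecRel.eq →
      ChainB M (some a) x (some a') →
      ChainT M a' y b →
      ChainT M a (x ++ a' :: y) b
end

/-- `SimpleBody M a₀ l b` : `l` is the body `a₁ … aₙ` of a simple chain
`⌈a₀⌉ a₁ … aₙ ⌊b⌋`, i.e. `a₀ ⋖ a₁ ≐ … ≐ aₙ ⋗ b` with `M a₀ b` defined. -/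
def SimpleBody (M : Option T → Option T → Option PrecRel)
    (a₀ : Option T) (l : List T) (b : Option T) : Prop :=
  (l ≠ []) ∧ M a₀ b ≠ none ∧
  (∀ h : l ≠ [], M a₀ (some (l.head h)) = some PrecRel.lt ∧
      M (some (l.getLast h)) b = some PrecRel.gt) ∧
  List.Chain' (fun x y => M (some x) (some y) = some PrecRel.eq) l

/-- `≐`-acyclicity of a precedence matrix. -/
def EqAcyclic (M : Option T → Option T → Option PrecRel) : Prop :=
  ∀ x : Option T, ¬ Relation.TransGen (fun u v => M u v = some PrecRel.eq) x x

variable {Q : Type*}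

mutual
/-- `Supp A q y q'` : the automaton `A` has a support labelled by the chain body `y`
leading from state `q` to state `q'`, ending with a flush labelled by the state
reached after the first filler. -/
inductive Supp (A : FloydAutomaton T Q) : Q → List T → Q → Prop
  | head0 {q₀ q₁ qf : Q} {a₁ : T} {y : List T} :
      q₁ ∈ A.push q₀ a₁ →
      SuppT A q₀ q₁ y qf →
      Supp A q₀ (a₁ :: y) qf
  | head {q₀ q₀' q₁ qf : Q} {a₁ : T} {x₀ y : List T} :
      Supp A q₀ x₀ q₀' →
      q₁ ∈ A.push q₀' a₁ →
      SuppT A q₀' q₁ y qf →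
      Supp A q₀ (x₀ ++ a₁ :: y) qf

/-- Auxiliary: the tail of a support; the first argument after `A` is the label
of the final flush. -/
inductive SuppT (A : FloydAutomaton T Q) : Q → Q → List T → Q → Prop
  | last0 {q₀' qn qf : Q} :
      qf ∈ A.flush qn q₀' →
      SuppT A q₀' qn [] qf
  | last {q₀' qn q' qf : Q} {xn : List T} :
      Supp A qn xn q' →
      qf ∈ A.flush q' q₀' →
      SuppT A q₀' qn xn qf
  | cons0 {q₀' qi q'' qf : Q} {a : T} {y : List T} :
      q'' ∈ A.push qi a →
      SuppT A q₀' q'' y qf →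
      SuppT A q₀' qi (a :: y) qf
  | cons {q₀' qi q' q'' qf : Q} {a : T} {x y : List T} :
      Supp A qi x q' →
      q'' ∈ A.push q' a →
      SuppT A q₀' q'' y qf →
      SuppT A q₀' qi (x ++ a :: y) qf
end

end Chains

section Grammar

variable {T : Type*}

open Symbol in
/-- A symbol is a nonterminal. -/
def IsNT {N : Type*} : Symbol T N → Prop
  | Symbol.nonterminal _ => True
  | Symbol.terminal _ => False

/-- A string over `Σ ∪ N` has no two adjacent nonterminals. -/
def NoAdjNT {N : Type*} (l : List (Symbol T N)) : Prop :=
  List.Chain' (fun x y => ¬(IsNT x ∧ IsNT y)) l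

/-- An operator grammar: no right-hand side contains two adjacent nonterminals. -/
def OperatorGrammar (g : ContextFreeGrammar T) : Prop :=
  ∀ r ∈ g.rules, NoAdjNT r.output

/-- The equal-in-precedence relation `a ≐ b` of a grammar. -/
def GEq (g : ContextFreeGrammar T) (a b : T) : Prop :=
  ∃ r ∈ g.rules, ∃ α mid β,
    r.output = α ++ Symbol.terminal a :: (mid ++ Symbol.terminal b :: β) ∧
    (mid = [] ∨ ∃ B, mid = [Symbol.nonterminal B])

/-- The left terminal set: `a ∈ 𝓛(A)` iff `A ⇒* B a α` with `B ∈ N ∪ {ε}`. -/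
def LTerm (g : ContextFreeGrammar T) (A : g.NT) (a : T) : Prop :=
  ∃ pre α, g.Derives [Symbol.nonterminal A] (pre ++ Symbol.terminal a :: α) ∧
    (pre = [] ∨ ∃ B, pre = [Symbol.nonterminal B])

/-- The right terminal set: `a ∈ 𝓡(A)` iff `A ⇒* α a B` with `B ∈ N ∪ {ε}`. -/
def RTerm (g : ContextFreeGrammar T) (A : g.NT) (a : T) : Prop :=
  ∃ α post, g.Derives [Symbol.nonterminal A] (α ++ Symbol.terminal a :: post) ∧
    (post = [] ∨ ∃ B, post = [Symbol.nonterminal B])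

/-- The yields-precedence relation `a ⋖ b` of a grammar. -/
def GLt (g : ContextFreeGrammar T) (a b : T) : Prop :=
  ∃ r ∈ g.rules, ∃ α β D,
    r.output = α ++ Symbol.terminal a :: Symbol.nonterminal D :: β ∧ LTerm g D b

/-- The takes-precedence relation `a ⋗ b` of a grammar. -/
def GGt (g : ContextFreeGrammar T) (a b : T) : Prop :=
  ∃ r ∈ g.rules, ∃ α β D,
    r.output = α ++ Symbol.nonterminal D :: Symbol.terminal b :: β ∧ RTerm g D a

/-- Conflict-freeness: for each pair of terminals at most one precedence relation holds. -/
def ConflictFree (g : ContextFreeGrammar T) : Prop :=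
  ∀ a b : T, ¬(GEq g a b ∧ GLt g a b) ∧ ¬(GEq g a b ∧ GGt g a b) ∧
    ¬(GLt g a b ∧ GGt g a b)

/-- A Floyd (operator precedence) grammar. -/
def FloydGrammar (g : ContextFreeGrammar T) : Prop :=
  OperatorGrammar g ∧ ConflictFree g

end Grammar

/-! A state `(b, K)` of the determinization stands for all runs of `A` with the same stack
shape. Of an `A`-stack, later moves read only its *spine*: the top state and the state just
below each mark, down to the bottom state. A pair `(q, p) ∈ K` says that `q` can be a spine
state whose successor on the spine is `p` (`⊥` at the bottom). The invariant is that the spines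
of the `A`-configurations reachable on a given prefix are exactly the chains `q₀ q₁ … qₙ` with
`(qᵢ, qᵢ₊₁)` in the `i`-th spine state of `Ã` and `(qₙ, ⊥)` in the last one. Every `A`-move
keeps its spine covered under the matching `Ã`-move, and every chain covered after an `Ã`-move
comes, through an `A`-move, from a chain covered before it. With an empty stack the spine is the
single state `q`, covered iff `(q, ⊥) ∈ K`: this is the acceptance condition of `Ã`. -/

namespace FloydAutomaton

section Stacks

variable {T S S' : Type*}

def stackShape (st : List (Bool × T × S)) : List (Bool × T) :=
  st.map fun e => (e.1, e.2.1)

def SameShape (c : Config T S) (c' : Config T S') : Prop :=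
  c.input = c'.input ∧ stackShape c.stack = stackShape c'.stack

def stackSpine (b : S) : List (Bool × T × S) → List S
  | [] => [b]
  | (true, _, q) :: st => q :: stackSpine b st
  | (false, _, q) :: st => q :: (stackSpine b st).tail

def Config.spine (c : Config T S) : List S := stackSpine c.base c.stack

lemma stackSpine_cons (b : S) (e : Bool × T × S) (st : List (Bool × T × S)) :
    stackSpine b (e :: st) =
      e.2.2 :: if e.1 then stackSpine b st else (stackSpine b st).tail := by
  obtain ⟨_ | _, _, _⟩ := e <;> rfl

lemma Config.spine_eq_topState_cons (c : Config T S) : c.spine = c.topState :: c.spine.tail := by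
  obtain ⟨b, _ | ⟨e, st⟩, w⟩ := c
  · rfl
  · simp [Config.spine, stackSpine_cons, Config.topState]

lemma stackSpine_unmarked_append (b : S) {pre : List (Bool × T × S)}
    (hpre : ∀ e ∈ pre, e.1 = false) (x : T) (q : S) (st : List (Bool × T × S)) (w : List T) :
    stackSpine b (pre ++ (true, x, q) :: st) =
      Config.topState ⟨b, pre ++ (true, x, q) :: st, w⟩ :: stackSpine b st := by
  induction pre with
  | nil => rfl
  | cons e pre ih =>
    rw [List.forall_mem_cons] at hpre
    simp [stackSpine_cons, hpre.1, ih hpre.2, Config.topState]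

lemma topSym_eq_of_stackShape_eq {c : Config T S} {c' : Config T S'}
    (h : stackShape c.stack = stackShape c'.stack) : c.topSym = c'.topSym := by
  obtain ⟨_, _ | _, _⟩ := c <;> obtain ⟨_, _ | _, _⟩ := c' <;>
    simp_all [stackShape, Config.topSym]

lemma exists_eq_unmarked_append_of_stackShape_eq {pre rest : List (Bool × T × S)} {x : T}
    {q : S} {st' : List (Bool × T × S')} (hpre : ∀ e ∈ pre, e.1 = false)
    (h : stackShape (pre ++ (true, x, q) :: rest) = stackShape st') :
    ∃ pre' q' rest', st' = pre' ++ (true, x, q') :: rest' ∧ (∀ e ∈ pre', e.1 = false) ∧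
      stackShape rest = stackShape rest' := by
  simp only [stackShape, List.map_append, List.map_cons] at h
  obtain ⟨pre', l, rfl, hpre', hl⟩ := List.map_eq_append_iff.mp h.symm
  obtain ⟨⟨m, x', q'⟩, rest', rfl, he, hrest⟩ := List.map_eq_cons_iff.mp hl
  obtain ⟨rfl, rfl⟩ := Prod.mk.inj he
  refine ⟨pre', q', rest', rfl, ?_, hrest.symm⟩
  have hmarks : ∀ p ∈ pre.map (fun e => (e.1, e.2.1)), p.1 = false :=
    List.forall_mem_map.mpr hpre
  exact List.forall_mem_map.mp (hpre' ▸ hmarks)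

end Stacks

variable {T Q : Type*}

section Determinization

variable (A : FloydAutomaton T Q)

def LookbackConsistent (c : Config T (DetState T Q)) : Prop :=
  c.base.1 = none ∧ ∀ e ∈ c.stack, e.2.2.1 = some e.2.1

lemma LookbackConsistent.topState_fst {c : Config T (DetState T Q)}
    (h : LookbackConsistent c) : c.topState.1 = c.topSym := by
  obtain ⟨b, _ | ⟨e, st⟩, w⟩ := c
  · exact h.1
  · exact h.2 e List.mem_cons_self

lemma LookbackConsistent.of_det_step {c d : Config T (DetState T Q)}
    (h : LookbackConsistent c) (hs : A.det.Step c d) : LookbackConsistent d := by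
  cases hs with
  | push _ _ hq | mark _ _ hq =>
    refine ⟨h.1, List.forall_mem_cons.mpr ⟨?_, h.2⟩⟩
    rw [Set.eq_of_mem_singleton hq]
    rfl
  | @flushMid _ _ _ _ s _ _ _ _ _ hq =>
    refine ⟨h.1, List.forall_mem_cons.mpr ⟨?_, fun e he => h.2 e (by simp [he])⟩⟩
    rw [Set.eq_of_mem_singleton hq]
    exact h.2 s (by simp)
  | flushBot _ _ hq =>
    refine ⟨?_, by simp⟩
    rw [Set.eq_of_mem_singleton hq]
    exact h.1

lemma LookbackConsistent.of_det_reflTransGen {c d : Config T (DetState T Q)}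
    (h : LookbackConsistent c) (hs : Relation.ReflTransGen A.det.Step c d) :
    LookbackConsistent d := by
  induction hs with
  | refl => exact h
  | tail _ hstep ih => exact ih.of_det_step A hstep

end Determinization

def LinksIn : List Q → List (DetState T Q) → Prop
  | [], [] => True
  | q :: qs, σ :: σs => (q, qs.head?) ∈ σ.2 ∧ LinksIn qs σs
  | _, _ => False

variable {A : FloydAutomaton T Q}

lemma linksIn_detPushF_iff_of_eq {σ : DetState T Q} {a : T}
    (hM : A.M σ.1 (some a) = some .eq) {q : Q} {qs : List Q} {σs : List (DetState T Q)} :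
    LinksIn (q :: qs) (A.detPushF σ a :: σs) ↔
      ∃ q₀, q ∈ A.push q₀ a ∧ LinksIn (q₀ :: qs) (σ :: σs) := by
  simp only [LinksIn, detPushF, Set.mem_ofPred_eq, hM, Option.some.injEq, reduceCtorEq,
    false_and, true_and, false_or]
  constructor
  · rintro ⟨⟨q₀, p, hmem, hq, rfl⟩, hl⟩
    exact ⟨q₀, hq, hmem, hl⟩
  · rintro ⟨q₀, hq, hmem, hl⟩
    exact ⟨⟨q₀, _, hmem, hq, rfl⟩, hl⟩

lemma linksIn_detPushF_iff_of_lt {σ : DetState T Q} {a : T}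
    (hM : A.M σ.1 (some a) = some .lt) {q q₀ : Q} {qs : List Q} {σs : List (DetState T Q)} :
    LinksIn (q :: q₀ :: qs) (A.detPushF σ a :: σ :: σs) ↔
      q ∈ A.push q₀ a ∧ LinksIn (q₀ :: qs) (σ :: σs) := by
  simp only [LinksIn, detPushF, Set.mem_ofPred_eq, hM, Option.some.injEq, reduceCtorEq,
    false_and, true_and, or_false, List.head?_cons]
  constructor
  · rintro ⟨⟨_, p, hmem, hq, rfl⟩, hl⟩
    exact ⟨hq, hl⟩
  · rintro ⟨hq, hl⟩
    exact ⟨⟨q₀, _, hl.1, hq, rfl⟩, hl⟩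

lemma linksIn_detFlushF_iff {σ₁ σ₂ : DetState T Q} {h : Q} {qs : List Q}
    {σs : List (DetState T Q)} :
    LinksIn (h :: qs) (A.detFlushF σ₁ σ₂ :: σs) ↔
      ∃ r q, h ∈ A.flush r q ∧ LinksIn (r :: q :: qs) (σ₁ :: σ₂ :: σs) := by
  simp only [LinksIn, detFlushF, Set.mem_ofPred_eq, List.head?_cons]
  constructor
  · rintro ⟨⟨r, q, hr, hq, hh⟩, hl⟩
    exact ⟨r, q, hh, hr, hq, hl⟩
  · rintro ⟨r, q, hh, hr, hq, hl⟩
    exact ⟨⟨r, q, hr, hq, hh⟩, hl⟩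

theorem exists_det_step_of_step {c d : Config T Q} {c' : Config T (DetState T Q)}
    (hsh : SameShape c c') (hl : LinksIn c.spine c'.spine) (hok : LookbackConsistent c')
    (hs : A.Step c d) : ∃ d', A.det.Step c' d' ∧ SameShape d d' ∧ LinksIn d.spine d'.spine := by
  obtain ⟨σ, st', w'⟩ := c'
  obtain ⟨hw : c.input = w', hst⟩ := hsh
  have hsym := topSym_eq_of_stackShape_eq hst
  cases hs with
  | @push b st w q a hM hq =>
    subst hw
    refine ⟨_, .push a (hsym ▸ hM) rfl, ⟨rfl, by simpa [stackShape] using hst⟩, ?_⟩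
    rw [Config.spine_eq_topState_cons, (Config.mk σ st' _).spine_eq_topState_cons] at hl
    exact (linksIn_detPushF_iff_of_eq (by rwa [hok.topState_fst, ← hsym])).mpr ⟨_, hq, hl⟩
  | @mark b st w q a hM hq =>
    subst hw
    refine ⟨_, .mark a (hsym ▸ hM) rfl, ⟨rfl, by simpa [stackShape] using hst⟩, ?_⟩
    rw [Config.spine_eq_topState_cons, (Config.mk σ st' _).spine_eq_topState_cons] at hl
    have h := (linksIn_detPushF_iff_of_lt (by rwa [hok.topState_fst, ← hsym])).mpr ⟨hq, hl⟩
    rwa [← Config.spine_eq_topState_cons, ← Config.spine_eq_topState_cons] at h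
  | @flushMid b pre x qm s rest w q hpre hM hq =>
    subst hw
    obtain ⟨pre', Km, l', rfl, hpre', hl'⟩ := exists_eq_unmarked_append_of_stackShape_eq hpre hst
    obtain ⟨s', rest', rfl, hs, hrest⟩ := List.map_eq_cons_iff.mp hl'.symm
    obtain ⟨hs1, hs2⟩ := Prod.mk.inj hs
    refine ⟨_, .flushMid hpre' (hsym ▸ hM) rfl, ⟨rfl, ?_⟩, ?_⟩
    · simp [stackShape, hs1, hs2, hrest]
    · simp only [Config.spine, stackSpine_unmarked_append _ hpre _ _ _ w,
        stackSpine_unmarked_append _ hpre' _ _ _ w, stackSpine_cons, hs1] at hl ⊢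
      exact linksIn_detFlushF_iff.mpr ⟨_, _, hq, hl⟩
  | @flushBot b pre x qm w q hpre hM hq =>
    subst hw
    obtain ⟨pre', Km, l', rfl, hpre', hl'⟩ := exists_eq_unmarked_append_of_stackShape_eq hpre hst
    obtain rfl := List.map_eq_nil_iff.mp hl'.symm
    refine ⟨_, .flushBot hpre' (hsym ▸ hM) rfl, ⟨rfl, rfl⟩, ?_⟩
    simp only [Config.spine, stackSpine_unmarked_append _ hpre _ _ _ w,
      stackSpine_unmarked_append _ hpre' _ _ _ w] at hl
    exact linksIn_detFlushF_iff.mpr ⟨_, _, hq, hl⟩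

theorem exists_det_run_of_run {c d : Config T Q} {c' : Config T (DetState T Q)}
    (hsh : SameShape c c') (hl : LinksIn c.spine c'.spine) (hok : LookbackConsistent c')
    (hrun : Relation.ReflTransGen A.Step c d) :
    ∃ d', Relation.ReflTransGen A.det.Step c' d' ∧ SameShape d d' ∧ LinksIn d.spine d'.spine := by
  induction hrun with
  | refl => exact ⟨c', .refl, hsh, hl⟩
  | tail _ hs ih =>
    obtain ⟨e', hrun', hsh', hl'⟩ := ih
    obtain ⟨d', hs', hsh'', hl''⟩ :=
      exists_det_step_of_step hsh' hl' (hok.of_det_reflTransGen A hrun') hs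
    exact ⟨d', hrun'.tail hs', hsh'', hl''⟩

variable (A) in
def Reflects (c' d' : Config T (DetState T Q)) : Prop :=
  ∀ qs, LinksIn qs d'.spine → ∃ qs', LinksIn qs' c'.spine ∧
    ∀ c : Config T Q, SameShape c c' → c.spine = qs' →
      ∃ d, A.Step c d ∧ SameShape d d' ∧ d.spine = qs

lemma reflects_push {σ : DetState T Q} {st' : List (Bool × T × DetState T Q)} {a : T} {w : List T}
    (hok : LookbackConsistent ⟨σ, st', a :: w⟩)
    (hM : A.M (Config.topSym ⟨σ, st', a :: w⟩) (some a) = some .eq) :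
    A.Reflects ⟨σ, st', a :: w⟩
      ⟨σ, (false, a, A.detPushF (Config.topState ⟨σ, st', a :: w⟩) a) :: st', w⟩ := by
  rintro (_ | ⟨q, qs⟩) hl
  · exact hl.elim
  obtain ⟨q₀, hq, hl₀⟩ := (linksIn_detPushF_iff_of_eq (hok.topState_fst ▸ hM)).mp hl
  refine ⟨q₀ :: qs, (Config.mk σ st' _).spine_eq_topState_cons ▸ hl₀, ?_⟩
  rintro ⟨b, st, w⟩ ⟨rfl, hst⟩ hspine
  rw [Config.spine_eq_topState_cons, List.cons.injEq] at hspine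
  refine ⟨_, .push a ((topSym_eq_of_stackShape_eq hst) ▸ hM) (hspine.1 ▸ hq),
    ⟨rfl, by simpa [stackShape] using hst⟩, congrArg (q :: ·) hspine.2⟩

lemma reflects_mark {σ : DetState T Q} {st' : List (Bool × T × DetState T Q)} {a : T} {w : List T}
    (hok : LookbackConsistent ⟨σ, st', a :: w⟩)
    (hM : A.M (Config.topSym ⟨σ, st', a :: w⟩) (some a) = some .lt) :
    A.Reflects ⟨σ, st', a :: w⟩
      ⟨σ, (true, a, A.detPushF (Config.topState ⟨σ, st', a :: w⟩) a) :: st', w⟩ := by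
  intro qs hl
  change LinksIn qs (_ :: (Config.mk σ st' (a :: w)).spine) at hl
  rw [Config.spine_eq_topState_cons] at hl
  obtain _ | ⟨q, _ | ⟨q₀, qs⟩⟩ := qs
  · exact hl.elim
  · exact hl.2.elim
  obtain ⟨hq, hl₀⟩ := (linksIn_detPushF_iff_of_lt (hok.topState_fst ▸ hM)).mp hl
  refine ⟨q₀ :: qs, (Config.mk σ st' _).spine_eq_topState_cons ▸ hl₀, ?_⟩
  rintro ⟨b, st, w⟩ ⟨rfl, hst⟩ hspine
  have htop : Config.topState ⟨b, st, a :: w⟩ = q₀ := by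
    rw [Config.spine_eq_topState_cons, List.cons.injEq] at hspine
    exact hspine.1
  exact ⟨_, .mark a ((topSym_eq_of_stackShape_eq hst) ▸ hM) (htop ▸ hq),
    ⟨rfl, by simpa [stackShape] using hst⟩, congrArg (q :: ·) hspine⟩

lemma reflects_flushMid {σ : DetState T Q} {pre' rest' : List (Bool × T × DetState T Q)} {x : T}
    {Km : DetState T Q} {s' : Bool × T × DetState T Q} {w : List T}
    (hpre' : ∀ e ∈ pre', e.1 = false)
    (hM : A.M (Config.topSym ⟨σ, pre' ++ (true, x, Km) :: s' :: rest', w⟩) w.head? = some .gt) :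
    A.Reflects ⟨σ, pre' ++ (true, x, Km) :: s' :: rest', w⟩
      ⟨σ, (s'.1, s'.2.1, A.detFlushF
        (Config.topState ⟨σ, pre' ++ (true, x, Km) :: s' :: rest', w⟩) s'.2.2) :: rest', w⟩ := by
  intro qs hl
  simp only [Config.spine, stackSpine_cons] at hl
  obtain _ | ⟨h, qs⟩ := qs
  · exact hl.elim
  obtain ⟨r, q, hh, hl₀⟩ := linksIn_detFlushF_iff.mp hl
  refine ⟨r :: q :: qs, ?_, ?_⟩
  · simpa only [Config.spine, stackSpine_unmarked_append _ hpre' _ _ _ w, stackSpine_cons]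
      using hl₀
  rintro ⟨b, st, w⟩ ⟨rfl, hst⟩ hspine
  obtain ⟨pre, qm, l, rfl, hpre, hl'⟩ := exists_eq_unmarked_append_of_stackShape_eq hpre' hst.symm
  obtain ⟨s, rest, rfl, hs, hrest⟩ := List.map_eq_cons_iff.mp hl'.symm
  obtain ⟨hs1, hs2⟩ := Prod.mk.inj hs
  simp only [Config.spine, stackSpine_unmarked_append _ hpre _ _ _ w, stackSpine_cons,
    List.cons.injEq] at hspine
  obtain ⟨htop, rfl, hR⟩ := hspine
  refine ⟨_, .flushMid hpre ((topSym_eq_of_stackShape_eq hst) ▸ hM) (htop ▸ hh),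
    ⟨rfl, by simp [stackShape, hs1, hs2, hrest]⟩, ?_⟩
  simp only [Config.spine, stackSpine_cons, ← hR, hs1]

lemma reflects_flushBot {σ : DetState T Q} {pre' : List (Bool × T × DetState T Q)} {x : T}
    {Km : DetState T Q} {w : List T} (hpre' : ∀ e ∈ pre', e.1 = false)
    (hM : A.M (Config.topSym ⟨σ, pre' ++ [(true, x, Km)], w⟩) w.head? = some .gt) :
    A.Reflects ⟨σ, pre' ++ [(true, x, Km)], w⟩
      ⟨A.detFlushF (Config.topState ⟨σ, pre' ++ [(true, x, Km)], w⟩) σ, [], w⟩ := by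
  rintro (_ | ⟨h, _ | ⟨q, qs⟩⟩) hl
  · exact hl.elim
  · obtain ⟨r, q, hh, hl₀⟩ := linksIn_detFlushF_iff.mp hl
    refine ⟨[r, q], ?_, ?_⟩
    · simpa only [Config.spine, stackSpine_unmarked_append _ hpre' _ _ _ w, stackSpine] using hl₀
    rintro ⟨b, st, w⟩ ⟨rfl, hst⟩ hspine
    obtain ⟨pre, qm, l, rfl, hpre, hl'⟩ :=
      exists_eq_unmarked_append_of_stackShape_eq hpre' hst.symm
    obtain rfl := List.map_eq_nil_iff.mp hl'.symm
    simp only [Config.spine, stackSpine_unmarked_append _ hpre _ _ _ w, stackSpine,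
      List.cons.injEq] at hspine
    obtain ⟨htop, rfl, -⟩ := hspine
    exact ⟨_, .flushBot hpre ((topSym_eq_of_stackShape_eq hst) ▸ hM) (htop ▸ hh), ⟨rfl, rfl⟩, rfl⟩
  · exact hl.2.elim

theorem reflects_of_det_step {c' d' : Config T (DetState T Q)} (hs : A.det.Step c' d')
    (hok : LookbackConsistent c') : A.Reflects c' d' := by
  cases hs with
  | push a hM hP => exact Set.eq_of_mem_singleton hP ▸ reflects_push hok hM
  | mark a hM hP => exact Set.eq_of_mem_singleton hP ▸ reflects_mark hok hM
  | flushMid hpre' hM hF => exact Set.eq_of_mem_singleton hF ▸ reflects_flushMid hpre' hM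
  | flushBot hpre' hM hF => exact Set.eq_of_mem_singleton hF ▸ reflects_flushBot hpre' hM

theorem exists_run_of_det_run {σ : DetState T Q} {y : List T} {d' : Config T (DetState T Q)}
    (hσ : σ.1 = none) (hrun : Relation.ReflTransGen A.det.Step ⟨σ, [], y⟩ d')
    {qs : List Q} (hl : LinksIn qs d'.spine) :
    ∃ q, (q, none) ∈ σ.2 ∧ ∃ d, Relation.ReflTransGen A.Step ⟨q, [], y⟩ d ∧
      SameShape d d' ∧ d.spine = qs := by
  induction hrun generalizing qs with
  | refl =>
    obtain _ | ⟨q, _ | _⟩ := qs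
    · exact hl.elim
    · exact ⟨q, hl.1, _, .refl, ⟨rfl, rfl⟩, rfl⟩
    · exact hl.2.elim
  | tail hrun' hs ih =>
    have hok := LookbackConsistent.of_det_reflTransGen A ⟨hσ, by simp⟩ hrun'
    obtain ⟨qs', hl', hreflect⟩ := reflects_of_det_step hs hok qs hl
    obtain ⟨q, hq, c, hrunA, hsh, hspine⟩ := ih hl'
    obtain ⟨d, hs', hsh', hspine'⟩ := hreflect c hsh hspine
    exact ⟨q, hq, d, hrunA.tail hs', hsh', hspine'⟩

theorem accepts_det_of_accepts {y : List T} (h : A.Accepts y) : A.det.Accepts y := by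
  obtain ⟨qI, hqI, qF, hqF, hrun⟩ := h
  let cI : Config T (DetState T Q) := ⟨(none, {p | p.2 = none ∧ p.1 ∈ A.init}), [], y⟩
  have hI : LookbackConsistent cI := ⟨rfl, by simp [cI]⟩
  have hl : LinksIn (Config.mk qI [] y).spine cI.spine := ⟨⟨rfl, hqI⟩, trivial⟩
  obtain ⟨⟨σ, st', _⟩, hrun', ⟨rfl, hst⟩, hl'⟩ := exists_det_run_of_run ⟨rfl, rfl⟩ hl hI hrun
  obtain rfl : st' = [] := List.map_eq_nil_iff.mp hst.symm
  exact ⟨_, rfl, σ, ⟨(hI.of_det_reflTransGen A hrun').1, qF, hqF, hl'.1⟩, hrun'⟩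

theorem accepts_of_det_accepts {y : List T} (h : A.det.Accepts y) : A.Accepts y := by
  obtain ⟨_, rfl, σ, ⟨-, qF, hqF, hF⟩, hrun⟩ := h
  obtain ⟨qI, ⟨-, hqI⟩, ⟨b, st, _⟩, hrunA, ⟨rfl, hst⟩, hspine⟩ :=
    exists_run_of_det_run rfl hrun (qs := [qF]) ⟨hF, trivial⟩
  obtain rfl : st = [] := List.map_eq_nil_iff.mp hst
  obtain rfl : b = qF := (List.cons.inj hspine).1
  exact ⟨qI, hqI, b, hqF, hrunA⟩

end FloydAutomaton

/-- determinization preserves acceptance: a string is accepted by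
`A` iff it is accepted by its powerset determinization `A.det` (whose initial
state is `(#, I × {⊥})` and whose final states are the `(#, K)` with some
`(q, ⊥) ∈ K`, `q ∈ F`). -/
theorem det_preserves_acceptance {T Q : Type*} (A : FloydAutomaton T Q)
    (y : List T) : A.Accepts y ↔ A.det.Accepts y :=
  ⟨FloydAutomaton.accepts_det_of_accepts, FloydAutomaton.accepts_of_det_accepts⟩
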